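/- arXiv:2605.26060 — 5 statements merged into one kernel-verified Lean document; each statement's English description precedes it below -/
import Mathlib

section
/- Let F be a stable (shift-closed) r-uniform hypergraph on [n], let R₀ ⊆ [n], and let I′ be an initial segment of the ordered set [n] \ R₀ with |I′| ≥ r·t. If F contains t pairwise disjoint edges all avoiding R₀, then F contains t pairwise disjoint edges avoiding R₀ and all contained in I′. -/
/-!
Let `S` be the union of the matching; it has `r·t` elements and lies in `[n] \ R₀`. Send the
`i`-th smallest element of `S` to the `i`-th smallest element of `I'`. Since `I'` is an initial
segment of a set containing `S`, this map only moves elements down, and being strictly monotone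
it pushes each edge down coordinatewise, so by stability the images of the edges lie in `F`.
Injectivity on `S` keeps them pairwise disjoint and distinct.
-/

/-- `A ⪯ B` coordinatewise: the sorted list of `A` is pointwise at most the sorted list of `B`. -/
def DomList (A B : Finset ℕ) : Prop :=
  List.Forall₂ (· ≤ ·) (A.sort (· ≤ ·)) (B.sort (· ≤ ·))

/-- A family of finite sets of positive integers is stable (compressed) if it is closed under
coordinatewise decrease. -/
def StableFam (F : Finset (Finset ℕ)) : Prop :=
  ∀ B ∈ F, ∀ A : Finset ℕ, (∀ a ∈ A, 1 ≤ a) → DomList A B → A ∈ F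

open Finset

lemma domList_image_of_strictMonoOn {e : Finset ℕ} {f : ℕ → ℕ} (hmono : StrictMonoOn f e)
    (hle : ∀ x ∈ e, f x ≤ x) : DomList (e.image f) e := by
  have hsort : (e.image f).sort (· ≤ ·) = (e.sort (· ≤ ·)).map f := by
    rw [← sort_val, image_val_of_injOn hmono.injOn, ← sort_val]
    exact (Multiset.map_sort _ _ _ _ fun a ha b hb => (hmono.le_iff_le ha hb).symm).symm
  rw [DomList, hsort, List.forall₂_map_left_iff, List.forall₂_same]
  exact fun x hx => hle x ((mem_sort _).1 hx)

lemma orderEmbOfFin_castLE_le {α : Type*} [LinearOrder α] {S I : Finset α} (hSI : #S ≤ #I)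
    (hinit : ∀ x ∈ I, ∀ y ∈ S, y ≤ x → y ∈ I) (i : Fin #S) :
    I.orderEmbOfFin rfl (Fin.castLE hSI i) ≤ S.orderEmbOfFin rfl i := by
  set φ := I.orderEmbOfFin rfl
  set ψ := S.orderEmbOfFin rfl
  -- Otherwise the `i + 1` smallest elements of `S` would lie in `I` below its `i`-th element.
  by_contra! hlt
  have hsub : (Iic i).map ψ.toEmbedding ⊆ (Iio (Fin.castLE hSI i)).map φ.toEmbedding := by
    intro x hx
    obtain ⟨j, hj, rfl⟩ := mem_map.1 hx
    have hjI : ψ j ∈ I := hinit _ (I.orderEmbOfFin_mem rfl _) _ (S.orderEmbOfFin_mem rfl j)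
      ((ψ.monotone (mem_Iic.1 hj)).trans hlt.le)
    obtain ⟨m, hm⟩ : ψ j ∈ Set.range φ := (I.range_orderEmbOfFin rfl).symm ▸ hjI
    refine mem_map.2 ⟨m, mem_Iio.2 (φ.lt_iff_lt.1 ?_), hm⟩
    exact hm ▸ (ψ.monotone (mem_Iic.1 hj)).trans_lt hlt
  have := card_le_card hsub
  simp only [card_map, Fin.card_Iic, Fin.card_Iio, Fin.val_castLE] at this
  omega

lemma exists_strictMonoOn_mapsTo_le {α : Type*} [LinearOrder α] {S I : Finset α}
    (hSI : #S ≤ #I) (hinit : ∀ x ∈ I, ∀ y ∈ S, y ≤ x → y ∈ I) :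
    ∃ f : α → α, StrictMonoOn f S ∧ Set.MapsTo f S I ∧ ∀ x ∈ S, f x ≤ x := by
  classical
  set idx : S ≃o Fin #S := (S.orderIsoOfFin rfl).symm
  set g : S ↪o α :=
    idx.toOrderEmbedding.trans ((Fin.castLEOrderEmb hSI).trans (I.orderEmbOfFin rfl))
  refine ⟨fun y => if hy : y ∈ S then g ⟨y, hy⟩ else y, ?_, ?_, ?_⟩
  · intro x (hx : x ∈ S) y (hy : y ∈ S) hxy
    simp only [dif_pos hx, dif_pos hy]
    exact g.strictMono (Subtype.mk_lt_mk.2 hxy)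
  · intro x (hx : x ∈ S)
    simp only [dif_pos hx]
    exact I.orderEmbOfFin_mem rfl _
  · intro x (hx : x ∈ S)
    simp only [dif_pos hx]
    have := orderEmbOfFin_castLE_le hSI hinit (idx ⟨x, hx⟩)
    rwa [← S.coe_orderIsoOfFin_apply rfl, OrderIso.apply_symm_apply] at this

lemma pairwise_disjoint_image_image_of_injOn {α β : Type*} [DecidableEq α] [DecidableEq β]
    {M : Finset (Finset α)} {f : α → β} (hf : Set.InjOn f (M.biUnion id))
    (hM : (M : Set (Finset α)).Pairwise Disjoint) :
    (M.image (·.image f) : Set (Finset β)).Pairwise Disjoint := by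
  rw [coe_image]
  refine Set.Pairwise.image fun e₁ h₁ e₂ h₂ hne => ?_
  have hunion : (e₁ ∪ e₂ : Set α) ⊆ M.biUnion id :=
    Set.union_subset_iff.2
      ⟨coe_subset.2 (subset_biUnion_of_mem id h₁),
        coe_subset.2 (subset_biUnion_of_mem id h₂)⟩
  rw [Function.onFun, disjoint_iff_inter_eq_empty, ← image_inter_of_injOn _ _ (hf.mono hunion),
    disjoint_iff_inter_eq_empty.1 (hM h₁ h₂ hne), image_empty]

theorem stmt3_general (n r t : ℕ) (F : Finset (Finset ℕ))
    (hF : ∀ e ∈ F, e ⊆ Finset.Icc 1 n ∧ e.card = r)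
    (hstable : StableFam F)
    (R₀ I' : Finset ℕ)
    (hI'sub : I' ⊆ Finset.Icc 1 n \ R₀)
    (hinit : ∀ x ∈ I', ∀ y ∈ Finset.Icc 1 n \ R₀, y ≤ x → y ∈ I')
    (hI'card : r * t ≤ I'.card)
    (M : Finset (Finset ℕ)) (hMF : M ⊆ F) (hMcard : M.card = t)
    (hMdisj : (M : Set (Finset ℕ)).Pairwise Disjoint)
    (hMavoid : ∀ e ∈ M, Disjoint e R₀) :
    ∃ M' : Finset (Finset ℕ), M' ⊆ F ∧ M'.card = t ∧
      (M' : Set (Finset ℕ)).Pairwise Disjoint ∧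
      (∀ e ∈ M', Disjoint e R₀) ∧ (∀ e ∈ M', e ⊆ I') := by
  set S := M.biUnion id
  have hSsub : S ⊆ Icc 1 n \ R₀ := biUnion_subset.2 fun e he =>
    subset_sdiff.2 ⟨(hF e (hMF he)).1, hMavoid e he⟩
  have hScard : #S ≤ #I' := calc
    #S = ∑ e ∈ M, #e := card_biUnion hMdisj
    _ = t * r := by rw [sum_congr rfl fun e he => (hF e (hMF he)).2, sum_const, hMcard, smul_eq_mul]
    _ ≤ #I' := by rwa [mul_comm]
  obtain ⟨f, hmono, hmaps, hle⟩ :=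
    exists_strictMonoOn_mapsTo_le hScard fun x hx y hy => hinit x hx y (hSsub hy)
  have hMS : ∀ e ∈ M, e ⊆ S := fun e he => subset_biUnion_of_mem id he
  have hinI' : ∀ e ∈ M, e.image f ⊆ I' := fun e he =>
    image_subset_iff.2 fun x hx => hmaps (hMS e he hx)
  refine ⟨M.image (·.image f), ?_, ?_,
    pairwise_disjoint_image_image_of_injOn hmono.injOn hMdisj, ?_, ?_⟩
  · refine image_subset_iff.2 fun e he => hstable e (hMF he) _ (fun a ha => ?_) ?_
    · exact (mem_Icc.1 (mem_sdiff.1 (hI'sub (hinI' e he ha))).1).1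
    · exact domList_image_of_strictMonoOn (hmono.mono (hMS e he)) fun x hx => hle x (hMS e he hx)
  · rw [card_image_of_injOn (injOn_image_of_biUnion_injOn hmono.injOn), hMcard]
  · simp only [mem_image, forall_exists_index, and_imp, forall_apply_eq_imp_iff₂]
    exact fun e he => disjoint_of_subset_left (hinI' e he) (sdiff_disjoint.mono_left hI'sub)
  · simpa using hinI'

/-- Compressing a matching away from a forbidden set: if a stable `r`-uniform family on `[n]`
contains a `t`-matching avoiding `R₀`, and `I'` is an initial segment of `[n] \ R₀` of size at
least `r·t`, then it contains a `t`-matching avoiding `R₀` contained in `I'`. -/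
theorem stmt3 (n r t : ℕ) (F : Finset (Finset ℕ))
    (hF : ∀ e ∈ F, e ⊆ Finset.Icc 1 n ∧ e.card = r)
    (hstable : StableFam F)
    (R₀ I' : Finset ℕ) (hR₀ : R₀ ⊆ Finset.Icc 1 n)
    (hI'sub : I' ⊆ Finset.Icc 1 n \ R₀)
    (hinit : ∀ x ∈ I', ∀ y ∈ Finset.Icc 1 n \ R₀, y ≤ x → y ∈ I')
    (hI'card : r * t ≤ I'.card)
    (M : Finset (Finset ℕ)) (hMF : M ⊆ F) (hMcard : M.card = t)
    (hMdisj : (M : Set (Finset ℕ)).Pairwise Disjoint)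
    (hMavoid : ∀ e ∈ M, Disjoint e R₀) :
    ∃ M' : Finset (Finset ℕ), M' ⊆ F ∧ M'.card = t ∧
      (M' : Set (Finset ℕ)).Pairwise Disjoint ∧
      (∀ e ∈ M', Disjoint e R₀) ∧ (∀ e ∈ M', e ⊆ I') :=
  stmt3_general n r t F hF hstable R₀ I' hI'sub hinit hI'card M hMF hMcard hMdisj hMavoid
end

section
/- Let N = rs + r − 1 and let K = [N] be partitioned into s disjoint r-blocks and an (r−1)-set. Then the complete r-graph on K satisfies C(N, r) = Σ_{τ ∈ ([s] choose r)} Σ_{T ⊆ V_τ, |T| = r} 1 / C(s − z(T), r − z(T)), where V_τ is the union of the residual (r−1)-set with the blocks indexed by τ and z(T) is the number of blocks met by T. -/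
/-!
Each `r`-subset `T` of `K = D ∪ ⋃ᵢ Eᵢ` lies in the board `V_τ = D ∪ ⋃_{i ∈ τ} Eᵢ` exactly
when `τ` contains the set `Z(T)` of blocks that `T` meets. Hence `T` lies in
`C(s - |Z(T)|, r - |Z(T)|)` boards, and exchanging the two sums turns the right-hand side into
`Σ_{T ⊆ K, |T| = r} 1 = C(|K|, r)`.
-/

open Finset Function

section Blocks

variable {α ι : Type*} [DecidableEq α]

def blocksMet [Fintype ι] (E : ι → Finset α) (T : Finset α) : Finset ι :=
  univ.filter fun i => (T ∩ E i).Nonempty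

variable {E : ι → Finset α}

lemma card_blocksMet_le [Fintype ι] (hE : Pairwise (Disjoint on E)) (T : Finset α) :
    #(blocksMet E T) ≤ #T := by
  have hdisj : (blocksMet E T : Set ι).PairwiseDisjoint (fun i => T ∩ E i) :=
    fun i _ j _ hij => (hE hij).mono inter_subset_right inter_subset_right
  calc #(blocksMet E T)
      ≤ #((blocksMet E T).biUnion fun i => T ∩ E i) :=
        card_le_card_biUnion hdisj fun i hi => (mem_filter.1 hi).2
    _ ≤ #T := card_le_card (biUnion_subset.2 fun _ _ => inter_subset_left)

lemma subset_union_biUnion_iff [Fintype ι] {D T : Finset α} (hE : Pairwise (Disjoint on E))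
    (hD : ∀ i, Disjoint D (E i)) (τ : Finset ι) :
    T ⊆ D ∪ τ.biUnion E ↔ T ⊆ D ∪ univ.biUnion E ∧ blocksMet E T ⊆ τ := by
  constructor
  · intro hT
    refine ⟨hT.trans (union_subset_union_right (biUnion_subset_biUnion_of_subset_left _
      (subset_univ τ))), fun i hi => ?_⟩
    obtain ⟨x, hxT, hxE⟩ : ∃ x ∈ T, x ∈ E i := by
      simpa only [blocksMet, mem_filter, mem_univ, true_and, Finset.Nonempty, mem_inter]
        using hi
    rcases mem_union.1 (hT hxT) with hxD | hxτ
    · exact absurd hxE (disjoint_left.1 (hD i) hxD)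
    · obtain ⟨j, hj, hxj⟩ := mem_biUnion.1 hxτ
      obtain rfl : j = i := by_contra fun hji => disjoint_left.1 (hE hji) hxj hxE
      exact hj
  · rintro ⟨hTK, hZ⟩ x hxT
    rcases mem_union.1 (hTK hxT) with hxD | hxE
    · exact mem_union_left _ hxD
    · obtain ⟨i, -, hxi⟩ := mem_biUnion.1 hxE
      have hi : i ∈ blocksMet E T := mem_filter.2 ⟨mem_univ i, x, mem_inter.2 ⟨hxT, hxi⟩⟩
      exact mem_union_right _ (mem_biUnion.2 ⟨i, hZ hi, hxi⟩)

lemma card_union_biUnion {D : Finset α} (hE : Pairwise (Disjoint on E))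
    (hD : ∀ i, Disjoint D (E i)) (τ : Finset ι) :
    #(D ∪ τ.biUnion E) = #D + ∑ i ∈ τ, #(E i) := by
  rw [card_union_of_disjoint ((disjoint_biUnion_right _ _ _).2 fun i _ => hD i),
    card_biUnion fun i _ j _ hij => hE hij]

theorem sum_powersetCard_union_biUnion_div_choose [Fintype ι] [DecidableEq ι]
    {𝕜 : Type*} [DivisionSemiring 𝕜] [CharZero 𝕜] {D : Finset α} {r : ℕ}
    (hr : r ≤ Fintype.card ι) (hE : Pairwise (Disjoint on E))
    (hD : ∀ i, Disjoint D (E i)) :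
    ∑ τ ∈ powersetCard r (univ : Finset ι), ∑ T ∈ powersetCard r (D ∪ τ.biUnion E),
        (1 : 𝕜) / (Fintype.card ι - #(blocksMet E T)).choose (r - #(blocksMet E T)) =
      (#(D ∪ univ.biUnion E)).choose r := by
  rw [sum_comm' (t' := powersetCard r (D ∪ univ.biUnion E))
    (s' := fun T => (powersetCard r univ).filter (blocksMet E T ⊆ ·))]
  · rw [← card_powersetCard, card_eq_sum_ones, Nat.cast_sum]
    refine sum_congr rfl fun T hT => ?_
    have hZr : #(blocksMet E T) ≤ r :=
      (card_blocksMet_le hE T).trans (mem_powersetCard.1 hT).2.le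
    have hchoose :
        ((Fintype.card ι - #(blocksMet E T)).choose (r - #(blocksMet E T)) : 𝕜) ≠ 0 :=
      Nat.cast_ne_zero.2 (Nat.choose_pos (by omega)).ne'
    rw [sum_const, card_filter_powersetCard_subset _ _ _ (subset_univ _) hZr, card_univ,
      nsmul_eq_mul, Nat.cast_one, mul_one_div_cancel hchoose]
  · intro τ T
    simp only [mem_powersetCard, mem_filter, subset_univ, true_and,
      subset_union_biUnion_iff hE hD τ]
    tauto

end Blocks

theorem stmt10_general (r s : ℕ) (hs : r ≤ s)
    (E : Fin s → Finset ℕ) (D : Finset ℕ)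
    (hEcard : ∀ i, (E i).card = r) (hD : D.card = r - 1)
    (hdisj : ∀ i j, i ≠ j → Disjoint (E i) (E j))
    (hDdisj : ∀ i, Disjoint D (E i)) :
    (Nat.choose (r * s + r - 1) r : ℚ) =
      ∑ τ ∈ Finset.powersetCard r (Finset.univ : Finset (Fin s)),
        ∑ T ∈ Finset.powersetCard r (D ∪ τ.biUnion E),
          (1 : ℚ) /
            Nat.choose (s - (Finset.univ.filter fun i => (T ∩ E i).Nonempty).card)
              (r - (Finset.univ.filter fun i => (T ∩ E i).Nonempty).card) := by
  have hK : #(D ∪ univ.biUnion E) = r * s + r - 1 := by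
    rw [card_union_biUnion hdisj hDdisj, hD]
    simp only [hEcard, sum_const, card_univ, Fintype.card_fin, smul_eq_mul, Nat.mul_comm s r]
    rcases Nat.eq_zero_or_pos r with rfl | hr_pos
    · simp
    · omega
  have := sum_powersetCard_union_biUnion_div_choose (𝕜 := ℚ) (D := D)
    (hs.trans_eq (Fintype.card_fin s).symm) hdisj hDdisj
  rw [Fintype.card_fin, hK] at this
  exact this.symm

/-- Double-counting identity for the complete `r`-graph on `K = [rs+r−1]`, partitioned into `s`
disjoint `r`-blocks `E i` and a residual `(r−1)`-set `D`:
`C(rs+r−1, r) = Σ_τ Σ_{T ⊆ V_τ, |T| = r} 1 / C(s − z(T), r − z(T))`. -/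
theorem stmt10 (r s : ℕ) (hr : 2 ≤ r) (hs : r ≤ s)
    (E : Fin s → Finset ℕ) (D : Finset ℕ)
    (hEcard : ∀ i, (E i).card = r) (hD : D.card = r - 1)
    (hdisj : ∀ i j, i ≠ j → Disjoint (E i) (E j))
    (hDdisj : ∀ i, Disjoint D (E i)) :
    (Nat.choose (r * s + r - 1) r : ℚ) =
      ∑ τ ∈ Finset.powersetCard r (Finset.univ : Finset (Fin s)),
        ∑ T ∈ Finset.powersetCard r (D ∪ τ.biUnion E),
          (1 : ℚ) /
            Nat.choose (s - (Finset.univ.filter fun i => (T ∩ E i).Nonempty).card)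
              (r - (Finset.univ.filter fun i => (T ∩ E i).Nonempty).card) :=
  stmt10_general r s hs E D hEcard hD hdisj hDdisj
end

section
/- Let Q₁, Q₂, Q₃ ∈ {1,2,3}⁴ be three points that in every coordinate use the values 1, 2, 3 exactly once each (i.e., they form an upper 3-matching). For any single forbidden value f ∈ {0,1,2,3} in each coordinate, there exist points Q′₁, Q′₂, Q′₃ with Q′_i ≤ Q_i coordinatewise, pairwise distinct values in every coordinate, and no coordinate value equal to the forbidden value of that coordinate. Concretely, the replacement map sending (f; 1,2,3) to (1,2,3) if f=0, (0,2,3) if f=1, (1,0,3) if f=2, (1,2,0) if f=3, applied coordinatewise, achieves this. -/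
private lemma stmt13_aux : ∀ a b c g : Fin 4, ({a, b, c} : Finset (Fin 4)) = {1, 2, 3} →
    ((if a = g then 0 else a) ≠ (if b = g then 0 else b) ∧
     (if a = g then 0 else a) ≠ (if c = g then 0 else c) ∧
     (if b = g then 0 else b) ≠ (if c = g then 0 else c)) ∧
    (if a = g then 0 else a) ≠ g ∧ (if b = g then 0 else b) ≠ g ∧
    (if c = g then 0 else c) ≠ g := by decide

/-- Upper-matching pushdown: given three points of `{1,2,3}⁴` using the values `1,2,3` exactly
once in every coordinate, and one forbidden value per coordinate, one can replace them by
coordinatewise no-larger points that are pairwise distinct in every coordinate and avoid the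
forbidden value of every coordinate. -/
theorem stmt13 (Q : Fin 3 → Fin 4 → Fin 4)
    (hQ : ∀ j, ({Q 0 j, Q 1 j, Q 2 j} : Finset (Fin 4)) = {1, 2, 3})
    (f : Fin 4 → Fin 4) :
    ∃ Q' : Fin 3 → Fin 4 → Fin 4,
      (∀ i j, Q' i j ≤ Q i j) ∧
      (∀ j, Q' 0 j ≠ Q' 1 j ∧ Q' 0 j ≠ Q' 2 j ∧ Q' 1 j ≠ Q' 2 j) ∧
      (∀ i j, Q' i j ≠ f j) := by
  refine ⟨fun i j => if Q i j = f j then 0 else Q i j, ?_, ?_, ?_⟩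
  · intro i j
    dsimp only
    split
    · exact Fin.zero_le _
    · exact le_refl _
  · intro j
    exact (stmt13_aux _ _ _ _ (hQ j)).1
  · intro i j
    have h := (stmt13_aux (Q 0 j) (Q 1 j) (Q 2 j) (f j) (hQ j)).2
    fin_cases i
    · exact h.1
    · exact h.2.1
    · exact h.2.2
end

section
/- For every integer s ≥ 3481, 25·(n₄(s) − 4s − 3) ≤ 12·(s − 3), where n₄(s) = min{ n ≥ 4(s+1) : C(n,4) − C(n−s,4) ≥ C(4s+3,4) }. Equivalently, C(m,4) − C(m−s,4) ≥ C(4s+3,4) for m = ⌊(112s+39)/25⌋ whenever s ≥ 3481. -/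
/-!
Multiplied by `4!`, the binomial inequality becomes one between falling factorials
`x (x - 1) (x - 2) (x - 3)`. Writing `s = 3481 + t` and `25 m = 112 s + 16 + b`, the gap between
its two sides is a polynomial in `t, b ≥ 0` with positive coefficients. The only remaining case,
`25 m = 112 s + 15`, forces `s ≡ 5 (mod 25)`, hence `s ≥ 3505`, and there the gap is a polynomial
with positive coefficients in `s - 3505`. Since `m = ⌊(112 s + 39) / 25⌋` satisfies
`25 m ≥ 112 s + 15` and `m ≥ 4 (s + 1)`, it bounds `n₄(s)`.
-/

/-- The 4-uniform transition value
`n₄(s) = min{ n ≥ 4(s+1) : C(n,4) − C(n−s,4) ≥ C(4s+3,4) }`. -/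
noncomputable def n4 (s : ℕ) : ℕ :=
  sInf {n : ℕ | 4 * (s + 1) ≤ n ∧
    Nat.choose (4 * s + 3) 4 + Nat.choose (n - s) 4 ≤ Nat.choose n 4}

open scoped NNReal Nat

theorem descPochhammer_four_eval {R : Type*} [CommRing R] (x : R) :
    (descPochhammer R 4).eval x = x * (x - 1) * (x - 2) * (x - 3) := by
  simp [descPochhammer_eval_eq_prod_range, Finset.prod_range_succ]

section CliqueLeCover

variable {s m : ℝ}

theorem clique_le_cover_of_sixteen_le (hs : 3481 ≤ s) (hm : 112 * s + 16 ≤ 25 * m) :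
    (descPochhammer ℝ 4).eval (4 * s + 3) + (descPochhammer ℝ 4).eval (m - s)
      ≤ (descPochhammer ℝ 4).eval m := by
  lift s - 3481 to ℝ≥0 using (by linarith) with t ht
  lift 25 * m - 112 * s - 16 to ℝ≥0 using (by linarith) with b hb
  obtain rfl : s = 3481 + t := by linarith
  obtain rfl : m = (112 * (3481 + t) + 16 + b) / 25 := by linarith
  simp only [descPochhammer_four_eval]
  rw [← sub_nonneg]
  ring_nf
  positivity

theorem clique_le_cover_of_eq_fifteen (hs : 3505 ≤ s) (hm : 25 * m = 112 * s + 15) :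
    (descPochhammer ℝ 4).eval (4 * s + 3) + (descPochhammer ℝ 4).eval (m - s)
      ≤ (descPochhammer ℝ 4).eval m := by
  lift s - 3505 to ℝ≥0 using (by linarith) with t ht
  obtain rfl : s = 3505 + t := by linarith
  obtain rfl : m = (112 * (3505 + t) + 15) / 25 := by linarith
  simp only [descPochhammer_four_eval]
  rw [← sub_nonneg]
  ring_nf
  positivity

end CliqueLeCover

theorem choose_four_add_choose_sub_le {s m : ℕ} (hs : 3481 ≤ s) (hm : 112 * s + 15 ≤ 25 * m) :
    (4 * s + 3).choose 4 + (m - s).choose 4 ≤ m.choose 4 := by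
  have hreal : (descPochhammer ℝ 4).eval ((4 * s + 3 : ℕ) : ℝ)
      + (descPochhammer ℝ 4).eval ((m - s : ℕ) : ℝ) ≤ (descPochhammer ℝ 4).eval (m : ℝ) := by
    rw [Nat.cast_sub (by omega)]
    push_cast
    rcases (by omega : 112 * s + 16 ≤ 25 * m ∨ 3505 ≤ s ∧ 25 * m = 112 * s + 15)
      with hm | ⟨hs, hm⟩
    · exact clique_le_cover_of_sixteen_le (by exact_mod_cast hs) (by exact_mod_cast hm)
    · exact clique_le_cover_of_eq_fifteen (by exact_mod_cast hs) (by exact_mod_cast hm)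
  simp only [descPochhammer_eval_eq_descFactorial, Nat.descFactorial_eq_factorial_mul_choose]
    at hreal
  have hnat : 4 ! * ((4 * s + 3).choose 4 + (m - s).choose 4) ≤ 4 ! * m.choose 4 := by
    rw [mul_add]
    exact_mod_cast hreal
  exact Nat.le_of_mul_le_mul_left hnat (Nat.factorial_pos 4)

/-- For every `s ≥ 3481`, `25(n₄(s) − 4s − 3) ≤ 12(s − 3)`; equivalently, the cover bound
already reaches the clique bound at `m = ⌊(112s+39)/25⌋`. -/
theorem stmt14 (s : ℕ) (hs : 3481 ≤ s) :
    25 * (n4 s - (4 * s + 3)) ≤ 12 * (s - 3) ∧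
    Nat.choose (4 * s + 3) 4 + Nat.choose ((112 * s + 39) / 25 - s) 4
      ≤ Nat.choose ((112 * s + 39) / 25) 4 := by
  set m := (112 * s + 39) / 25
  have hcover := choose_four_add_choose_sub_le hs (by omega : 112 * s + 15 ≤ 25 * m)
  have hn4 : n4 s ≤ m := Nat.sInf_le ⟨by omega, hcover⟩
  exact ⟨by omega, hcover⟩
end

section
/- Let s ≥ 1 and let N = n₄(s) satisfy 4s + 4 ≤ N ≤ (112s + 39)/25. Define for integers N the polynomial P(N, s) = −N³ − 3N²s + 9N² + 3Ns² + 12Ns − 26N + 255s³ − 102s² + 45s + 18. Then P(N, s) > 0; in particular, writing Δ_s(N) = C(N,4) − C(N−s,4) − C(4s+3,4), one has 6·(Δ_{s−1}(N−2) − Δ_s(N)) = P(N, s) > 0. -/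
lemma choose4 (n : ℕ) : 24 * (Nat.choose n 4 : ℤ) =
    (n : ℤ) * ((n:ℤ)-1) * ((n:ℤ)-2) * ((n:ℤ)-3) := by
  rcases lt_or_ge n 4 with h | h
  · interval_cases n <;> simp [Nat.choose]
  · obtain ⟨m, rfl⟩ := Nat.exists_eq_add_of_le h
    have hn : Nat.descFactorial (4+m) 4 = 24 * Nat.choose (4+m) 4 := by
      rw [Nat.descFactorial_eq_factorial_mul_choose]
      norm_num [Nat.factorial]
    have h2 : ((Nat.descFactorial (4+m) 4 : ℕ) : ℤ) = (24 : ℤ) * Nat.choose (4+m) 4 := by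
      exact_mod_cast hn
    rw [← h2]
    have e1 : 4+m-3 = m+1 := by omega
    have e2 : 4+m-2 = m+2 := by omega
    have e3 : 4+m-1 = m+3 := by omega
    simp [Nat.descFactorial, e1, e2, e3]
    ring

lemma posP (n t : ℤ) (hs : 1 ≤ t) (hN : 4*t+4 ≤ n) (hN' : 25*n ≤ 112*t+39) :
    0 < -n^3 - 3*n^2*t + 9*n^2 + 3*n*t^2 + 12*n*t - 26*n + 255*t^3 - 102*t^2 + 45*t + 18 := by
  nlinarith [mul_nonneg (mul_nonneg (sub_nonneg.2 hN') (sub_nonneg.2 hN')) (sub_nonneg.2 hN'),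
    mul_nonneg (sub_nonneg.2 hN') (sub_nonneg.2 (by linarith : 4*t+4 ≤ n)),
    mul_nonneg (mul_nonneg (sub_nonneg.2 hN') (sub_nonneg.2 hN)) (by linarith : (0:ℤ) ≤ t),
    mul_nonneg (sub_nonneg.2 hN') (sub_nonneg.2 hN),
    mul_nonneg (mul_nonneg (sub_nonneg.2 hN') (sub_nonneg.2 hN)) (sub_nonneg.2 hN),
    mul_nonneg (mul_nonneg (sub_nonneg.2 hN') (sub_nonneg.2 hN')) (sub_nonneg.2 hN),
    mul_pos (by linarith : (0:ℤ) < t) (by linarith : (0:ℤ) < t), hs]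

/-- With `Δ_t(N) = C(N,4) − C(N−t,4) − C(4t+3,4)` and
`P(N,s) = −N³ − 3N²s + 9N² + 3Ns² + 12Ns − 26N + 255s³ − 102s² + 45s + 18`,
for `s ≥ 1` and `4s+4 ≤ N ≤ (112s+39)/25` one has
`6(Δ_{s−1}(N−2) − Δ_s(N)) = P(N,s) > 0`. -/
theorem stmt15 (s N : ℕ) (hs : 1 ≤ s) (hN : 4 * s + 4 ≤ N)
    (hN' : 25 * N ≤ 112 * s + 39) :
    6 * (((Nat.choose (N - 2) 4 : ℤ) - Nat.choose ((N - 2) - (s - 1)) 4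
            - Nat.choose (4 * (s - 1) + 3) 4)
          - ((Nat.choose N 4 : ℤ) - Nat.choose (N - s) 4 - Nat.choose (4 * s + 3) 4))
      = -(N : ℤ)^3 - 3*(N : ℤ)^2*(s : ℤ) + 9*(N : ℤ)^2 + 3*(N : ℤ)*(s : ℤ)^2
          + 12*(N : ℤ)*(s : ℤ) - 26*(N : ℤ) + 255*(s : ℤ)^3 - 102*(s : ℤ)^2
          + 45*(s : ℤ) + 18 ∧
    0 < -(N : ℤ)^3 - 3*(N : ℤ)^2*(s : ℤ) + 9*(N : ℤ)^2 + 3*(N : ℤ)*(s : ℤ)^2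
          + 12*(N : ℤ)*(s : ℤ) - 26*(N : ℤ) + 255*(s : ℤ)^3 - 102*(s : ℤ)^2
          + 45*(s : ℤ) + 18 := by
  have c1 : ((N - 2 : ℕ) : ℤ) = (N:ℤ) - 2 := by omega
  have c2 : (((N - 2) - (s - 1) : ℕ) : ℤ) = (N:ℤ) - (s:ℤ) - 1 := by omega
  have c3 : ((4 * (s - 1) + 3 : ℕ) : ℤ) = 4*(s:ℤ) - 1 := by omega
  have c4 : ((N - s : ℕ) : ℤ) = (N:ℤ) - (s:ℤ) := by omega
  have c5 : ((4 * s + 3 : ℕ) : ℤ) = 4*(s:ℤ) + 3 := by omega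
  have A := choose4 (N - 2); rw [c1] at A
  have B := choose4 ((N - 2) - (s - 1)); rw [c2] at B
  have C := choose4 (4 * (s - 1) + 3); rw [c3] at C
  have D := choose4 N
  have E := choose4 (N - s); rw [c4] at E
  have F := choose4 (4 * s + 3); rw [c5] at F
  constructor
  · have key : (24:ℤ) * (6 * (((Nat.choose (N - 2) 4 : ℤ) - Nat.choose ((N - 2) - (s - 1)) 4
            - Nat.choose (4 * (s - 1) + 3) 4)
          - ((Nat.choose N 4 : ℤ) - Nat.choose (N - s) 4 - Nat.choose (4 * s + 3) 4)))
        = 24 * (-(N : ℤ)^3 - 3*(N : ℤ)^2*(s : ℤ) + 9*(N : ℤ)^2 + 3*(N : ℤ)*(s : ℤ)^2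
          + 12*(N : ℤ)*(s : ℤ) - 26*(N : ℤ) + 255*(s : ℤ)^3 - 102*(s : ℤ)^2
          + 45*(s : ℤ) + 18) := by
      linear_combination 6*A - 6*B - 6*C - 6*D + 6*E + 6*F
    exact mul_left_cancel₀ (by norm_num) key
  · have ht : (1:ℤ) ≤ (s:ℤ) := by exact_mod_cast hs
    have hn : 4*(s:ℤ) + 4 ≤ (N:ℤ) := by exact_mod_cast hN
    have hn' : 25*(N:ℤ) ≤ 112*(s:ℤ) + 39 := by exact_mod_cast hN'
    exact posP (N:ℤ) (s:ℤ) ht hn hn'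
end
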